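/- For every finite index set A, every h ≥ 1 and every monotone f:ℕ→ℕ, there exists a function g:ℕ→ℕ (depending only on f, h and |A|) such that every A-frame F with h(F) ≤ h, all of whose cluster-restrictions F↾C are f-tunable, is g-tunable. -/

import Mathlib

universe u

/-- A partition of the set `X`: a family of nonempty, pairwise disjoint sets covering `X`. -/
def IsPartition {X : Type*} (P : Set (Set X)) : Prop :=
  (∀ U ∈ P, U.Nonempty) ∧ (∀ U ∈ P, ∀ V ∈ P, U ≠ V → Disjoint U V) ∧ ⋃₀ P = Set.univ

/-- `Q` refines `P`: every element of `Q` is contained in some element of `P`. -/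
def Refines {X : Type*} (Q P : Set (Set X)) : Prop :=
  ∀ u ∈ Q, ∃ v ∈ P, u ⊆ v

/-- A partition `P` is `R`-tuned. -/
def TunedRel {X : Type*} (R : X → X → Prop) (P : Set (Set X)) : Prop :=
  ∀ U ∈ P, ∀ V ∈ P, (∃ a ∈ U, ∃ b ∈ V, R a b) → ∀ a ∈ U, ∃ b ∈ V, R a b

/-- A partition is tuned in the frame `(X, (R_a)_{a∈A})` if it is `R_a`-tuned for each `a`. -/
def TunedFrame {A X : Type*} (R : A → X → X → Prop) (P : Set (Set X)) : Prop :=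
  ∀ a, TunedRel (R a) P

/-- The frame `(X, (R_a)_{a∈A})` is `f`-tunable. -/
def Tunable {A X : Type*} (R : A → X → X → Prop) (f : ℕ → ℕ) : Prop :=
  ∀ P : Set (Set X), IsPartition P → P.Finite →
    ∃ Q : Set (Set X), IsPartition Q ∧ Refines Q P ∧ TunedFrame R Q ∧
      Q.Finite ∧ Q.ncard ≤ f P.ncard

/-- The union `R_F = ⋃_{a∈A} R_a` of the relations of a frame. -/
def unionRel {A X : Type*} (R : A → X → X → Prop) : X → X → Prop :=
  fun x y => ∃ a, R a x y

/-- The cluster of the point `x`: its equivalence class under `R* ∩ (R*)⁻¹`. -/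
def clusterOf {X : Type*} (R : X → X → Prop) (x : X) : Set X :=
  {y | Relation.ReflTransGen R x y ∧ Relation.ReflTransGen R y x}

/-- A strictly ascending chain of `n` points with respect to `Rs` (intended: `Rs = R*`). -/
def IsStrictChain {X : Type*} (Rs : X → X → Prop) (n : ℕ) (x : ℕ → X) : Prop :=
  ∀ i, i + 1 < n → Rs (x i) (x (i + 1)) ∧ ¬ Rs (x (i + 1)) (x i)

/-- The frame with union relation `R` has height at most `h`. -/
def HeightLe {X : Type*} (R : X → X → Prop) (h : ℕ) : Prop :=
  ∀ x : ℕ → X, ¬ IsStrictChain (Relation.ReflTransGen R) (h + 1) x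

/-!
Induction on the height. The top layer of a frame is a union of maximal clusters with no edges
between them, so tuned partitions of the clusters combine into one of the layer as soon as each
point also records the "type" of its cluster (its edges between colours), of which there are
boundedly many. Below the top layer, refine the partition by the blocks of the top layer each
point can see and apply induction to the remaining frame, whose height is one less.
-/

open Relation

section Coloring

variable {A X K L : Type*}

structure IsTunedRefinement (R : A → X → X → Prop) (Y : Set X) (p : X → K) (c : X → L) :
    Prop where
  refines : ∀ x ∈ Y, ∀ x' ∈ Y, c x = c x' → p x = p x'
  tuned : ∀ a, ∀ x ∈ Y, ∀ x' ∈ Y, c x = c x' → ∀ y ∈ Y, R a x y →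
    ∃ y' ∈ Y, R a x' y' ∧ c y' = c y

/-- Colourings stand in for finite partitions: `p` and `c` are the partitions into their
fibres, and only their restrictions to `Y` matter. -/
def TunableOn (R : A → X → X → Prop) (Y : Set X) (g : ℕ → ℕ) : Prop :=
  ∀ n (p : X → Fin n), ∃ c : X → Fin (g n), IsTunedRefinement R Y p c

variable {R : A → X → X → Prop} {Y : Set X} {p : X → K} {c : X → L}

namespace IsTunedRefinement

lemma comp_left {M : Type*} {e : L → M} (he : e.Injective) (hc : IsTunedRefinement R Y p c) :
    IsTunedRefinement R Y p (e ∘ c) where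
  refines x hx x' hx' h := hc.refines x hx x' hx' (he h)
  tuned a x hx x' hx' h y hy hxy := by
    obtain ⟨y', hy', hxy', hcy⟩ := hc.tuned a x hx x' hx' (he h) y hy hxy
    exact ⟨y', hy', hxy', congrArg e hcy⟩

lemma of_comp_right {M : Type*} {e : K → M} (he : e.Injective)
    (hc : IsTunedRefinement R Y (e ∘ p) c) : IsTunedRefinement R Y p c where
  refines x hx x' hx' h := he (hc.refines x hx x' hx' h)
  tuned := hc.tuned

lemma exists_fin [Finite L] (hc : IsTunedRefinement R Y p c) {m : ℕ} (hm : Nat.card L ≤ m) :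
    ∃ c' : X → Fin m, IsTunedRefinement R Y p c' := by
  have := Fintype.ofFinite L
  rw [Nat.card_eq_fintype_card] at hm
  obtain ⟨e⟩ := Function.Embedding.nonempty_of_card_le (hm.trans_eq (Fintype.card_fin m).symm)
  exact ⟨e ∘ c, hc.comp_left e.injective⟩

end IsTunedRefinement

lemma TunableOn.exists_tunedRefinement {g : ℕ → ℕ} (hT : TunableOn R Y g) [Finite K]
    (p : X → K) : ∃ c : X → Fin (g (Nat.card K)), IsTunedRefinement R Y p c := by
  obtain ⟨c, hc⟩ := hT _ (Finite.equivFin K ∘ p)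
  exact ⟨c, hc.of_comp_right (Finite.equivFin K).injective⟩

lemma tunableOn_empty : TunableOn R ∅ id :=
  fun _ p => ⟨p, fun _ _ _ _ h => h, fun _ _ hx => hx.elim⟩

end Coloring

section Partitions

variable {A Z L : Type*} {R : A → Z → Z → Prop}

def fiberPartition (c : Z → L) : Set (Set Z) :=
  {U | U.Nonempty ∧ ∃ k, c ⁻¹' {k} = U}

lemma isPartition_fiberPartition (c : Z → L) : IsPartition (fiberPartition c) := by
  refine ⟨fun U hU => hU.1, ?_,
    Set.eq_univ_of_forall fun z => ⟨c ⁻¹' {c z}, ⟨⟨z, rfl⟩, c z, rfl⟩, rfl⟩⟩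
  rintro _ ⟨-, k, rfl⟩ _ ⟨-, l, rfl⟩ hkl
  refine Set.disjoint_left.mpr fun z (hk : c z = k) (hl : c z = l) => hkl ?_
  rw [← hk, ← hl]

lemma fiberPartition_finite [Finite L] (c : Z → L) : (fiberPartition c).Finite :=
  (Set.finite_range fun k => c ⁻¹' {k}).subset fun _ hU => hU.2

lemma ncard_fiberPartition_le [Finite L] (c : Z → L) : (fiberPartition c).ncard ≤ Nat.card L :=
  (Set.ncard_le_ncard (fun _ hU => hU.2) (Set.finite_range _)).trans
    (Finite.card_range_le _)

namespace IsPartition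

variable {P : Set (Set Z)}

lemma eq_of_mem (hP : IsPartition P) {U V : Set Z} (hU : U ∈ P) (hV : V ∈ P) {z : Z}
    (hzU : z ∈ U) (hzV : z ∈ V) : U = V :=
  by_contra fun h => Set.disjoint_left.mp (hP.2.1 U hU V hV h) hzU hzV

lemma exists_mem (hP : IsPartition P) (z : Z) : ∃ U ∈ P, z ∈ U :=
  Set.mem_sUnion.mp (hP.2.2.symm ▸ Set.mem_univ z)

noncomputable def block (hP : IsPartition P) (z : Z) : P :=
  ⟨(hP.exists_mem z).choose, (hP.exists_mem z).choose_spec.1⟩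

lemma mem_block (hP : IsPartition P) (z : Z) : z ∈ (hP.block z : Set Z) :=
  (hP.exists_mem z).choose_spec.2

lemma block_eq (hP : IsPartition P) {U : Set Z} (hU : U ∈ P) {z : Z} (hz : z ∈ U) :
    (hP.block z : Set Z) = U :=
  hP.eq_of_mem (hP.block z).2 hU (hP.mem_block z) hz

end IsPartition

end Partitions

section Transfer

variable {A Z : Type*} {R : A → Z → Z → Prop}

lemma Tunable.tunableOn_univ {f : ℕ → ℕ} (hT : Tunable R f) (hf : Monotone f) :
    TunableOn R Set.univ f := by
  intro n p
  obtain ⟨Q, hQ, hQp, hQR, hQfin, hQcard⟩ :=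
    hT _ (isPartition_fiberPartition p) (fiberPartition_finite p)
  have := hQfin.to_subtype
  refine IsTunedRefinement.exists_fin (c := hQ.block) ⟨fun x _ x' _ h => ?_, ?_⟩
    (hQcard.trans (hf ((ncard_fiberPartition_le p).trans_eq (Nat.card_fin n))))
  · obtain ⟨_, ⟨-, k, rfl⟩, hQk⟩ := hQp _ (hQ.block x).2
    exact (hQk (hQ.mem_block x)).trans (hQk (h ▸ hQ.mem_block x')).symm
  · intro a x _ x' _ h y _ hxy
    obtain ⟨y', hy', hxy'⟩ := hQR a _ (hQ.block x).2 _ (hQ.block y).2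
      ⟨x, hQ.mem_block x, y, hQ.mem_block y, hxy⟩ x' (h ▸ hQ.mem_block x')
    exact ⟨y', trivial, hxy', Subtype.ext (hQ.block_eq (hQ.block y).2 hy')⟩

lemma TunableOn.tunable {g : ℕ → ℕ} (hT : TunableOn R Set.univ g) : Tunable R g := by
  intro P hP hPfin
  have := hPfin.to_subtype
  obtain ⟨c, hc⟩ := hT.exists_tunedRefinement hP.block
  refine ⟨fiberPartition c, isPartition_fiberPartition c, ?_, ?_, fiberPartition_finite c,
    (ncard_fiberPartition_le c).trans_eq (Nat.card_fin _)⟩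
  · rintro _ ⟨⟨z, hz⟩, k, rfl⟩
    refine ⟨hP.block z, (hP.block z).2, fun u hu => ?_⟩
    exact hc.refines u trivial z trivial (hu.trans hz.symm) ▸ hP.mem_block u
  · rintro a _ ⟨-, k, rfl⟩ _ ⟨-, l, rfl⟩ ⟨x, hx, y, hy, hxy⟩ x' hx'
    obtain ⟨y', -, hxy', hcy⟩ :=
      hc.tuned a x trivial x' trivial (hx.trans hx'.symm) y trivial hxy
    exact ⟨y', hcy.trans hy, hxy'⟩

lemma TunableOn.of_subtype {X : Type*} {R : A → X → X → Prop} {C : Set X} {f : ℕ → ℕ}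
    (hC : C.Nonempty) (hT : TunableOn (fun a (u v : C) => R a u v) Set.univ f) :
    TunableOn R C f := by
  classical
  intro n p
  obtain ⟨x₀, hx₀⟩ := hC
  obtain ⟨c, hc⟩ := hT n (p ∘ Subtype.val)
  let r (x : X) : C := if hx : x ∈ C then ⟨x, hx⟩ else ⟨x₀, hx₀⟩
  have hr : ∀ x (hx : x ∈ C), r x = ⟨x, hx⟩ := fun x hx => dif_pos hx
  refine ⟨c ∘ r, fun x hx x' hx' h => ?_, fun a x hx x' hx' h y hy hxy => ?_⟩
  · simp only [Function.comp_apply, hr x hx, hr x' hx'] at h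
    exact hc.refines _ trivial _ trivial h
  · simp only [Function.comp_apply, hr x hx, hr x' hx'] at h
    obtain ⟨y', -, hxy', hcy⟩ :=
      hc.tuned a ⟨x, hx⟩ trivial ⟨x', hx'⟩ trivial h ⟨y, hy⟩ trivial hxy
    exact ⟨y', y'.2, hxy', by simp [hr _ y'.2, hr _ hy, hcy]⟩

end Transfer

section Layers

variable {A X : Type*} (R : A → X → X → Prop)

def IsDownClosed (Y : Set X) : Prop :=
  ∀ ⦃x y⦄, ReflTransGen (unionRel R) x y → y ∈ Y → x ∈ Y

def topOf (Y : Set X) : Set X :=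
  {x ∈ Y | ∀ y ∈ Y, ReflTransGen (unionRel R) x y → ReflTransGen (unionRel R) y x}

def HeightLeOn (Y : Set X) (h : ℕ) : Prop :=
  ∀ x : ℕ → X, (∀ i ≤ h, x i ∈ Y) → ¬ IsStrictChain (ReflTransGen (unionRel R)) (h + 1) x

variable {R} {Y : Set X} {x y : X}

lemma mem_clusterOf_self {r : X → X → Prop} (x : X) : x ∈ clusterOf r x :=
  ⟨ReflTransGen.refl, ReflTransGen.refl⟩

lemma clusterOf_eq_of_mem {r : X → X → Prop} (hy : y ∈ clusterOf r x) :
    clusterOf r y = clusterOf r x := by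
  ext z
  exact ⟨fun hz => ⟨hy.1.trans hz.1, hz.2.trans hy.2⟩,
    fun hz => ⟨hy.2.trans hz.1, hz.2.trans hy.1⟩⟩

lemma topOf_subset : topOf R Y ⊆ Y := Set.sep_subset _ _

lemma mem_topOf_of_reach (hx : x ∈ topOf R Y) (hy : y ∈ Y)
    (hxy : ReflTransGen (unionRel R) x y) : y ∈ topOf R Y :=
  ⟨hy, fun z hz hyz => (hx.2 z hz (hxy.trans hyz)).trans hxy⟩

lemma mem_clusterOf_of_mem_topOf (hx : x ∈ topOf R Y) (hy : y ∈ Y)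
    (hxy : ReflTransGen (unionRel R) x y) : y ∈ clusterOf (unionRel R) x :=
  ⟨hxy, hx.2 y hy hxy⟩

lemma IsDownClosed.clusterOf_subset_topOf (hY : IsDownClosed R Y) (hx : x ∈ topOf R Y) :
    clusterOf (unionRel R) x ⊆ topOf R Y :=
  fun _ hy => mem_topOf_of_reach hx (hY hy.2 hx.1) hy.1

lemma IsDownClosed.diff_topOf (hY : IsDownClosed R Y) : IsDownClosed R (Y \ topOf R Y) :=
  fun _ _ hxy hy => ⟨hY hxy hy.1, fun hx => hy.2 (mem_topOf_of_reach hx hy.1 hxy)⟩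

lemma HeightLeOn.eq_empty (hY : HeightLeOn R Y 0) : Y = ∅ :=
  Set.eq_empty_of_forall_notMem fun y hy =>
    hY (fun _ => y) (fun _ _ => hy) fun i hi => absurd hi (by omega)

/-- A strict chain in `Y \ topOf R Y` ends below a point of `Y` it cannot return from,
which lengthens the chain by one. -/
lemma HeightLeOn.diff_topOf {h : ℕ} (hY : HeightLeOn R Y (h + 1)) :
    HeightLeOn R (Y \ topOf R Y) h := by
  intro x hxY hx
  obtain ⟨w, hwY, hxw, hwx⟩ : ∃ w ∈ Y, ReflTransGen (unionRel R) (x h) w ∧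
      ¬ ReflTransGen (unionRel R) w (x h) := by
    by_contra! hmax
    exact (hxY h le_rfl).2 ⟨(hxY h le_rfl).1, hmax⟩
  refine hY (fun i => if i ≤ h then x i else w) (fun i _ => ?_) fun i hi => ?_
  · split_ifs with hi
    exacts [(hxY i hi).1, hwY]
  · rcases Nat.lt_or_ge i h with hlt | hge
    · simpa [hlt.le, Nat.succ_le_of_lt hlt] using hx i (by omega)
    · obtain rfl : i = h := by omega
      simpa using ⟨hxw, hwx⟩

end Layers

section Gluing

variable {A X : Type*} [Fintype A] {R : A → X → X → Prop}

def clusterBound (k : ℕ) (f : ℕ → ℕ) (n : ℕ) : ℕ :=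
  f n * (n * 2 ^ (k * (f n * (f n * n))))

/-- The colour of `x` records its colour `κ C x` inside its cluster `C`, its `p`-colour, and the
type of `C`: which `R_a`-edges occur in `C` between which `κ C`-colours and `p`-colours. -/
lemma tunableOn_of_isolated_clusters {f : ℕ → ℕ}
    (hsub : ∀ x ∈ Y, clusterOf (unionRel R) x ⊆ Y)
    (hsep : ∀ a, ∀ x ∈ Y, ∀ y ∈ Y, R a x y → y ∈ clusterOf (unionRel R) x)
    (hcl : ∀ x, TunableOn R (clusterOf (unionRel R) x) f) :
    TunableOn R Y (clusterBound (Fintype.card A) f) := by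
  classical
  intro n p
  set cl := clusterOf (unionRel R)
  have hκ : ∀ C, ∃ κ : X → Fin (f n), ∀ x, cl x = C → IsTunedRefinement R C p κ := by
    intro C
    by_cases hC : ∃ x, cl x = C
    · obtain ⟨x, rfl⟩ := hC
      obtain ⟨κ, hκ⟩ := hcl x n p
      exact ⟨κ, fun _ _ => hκ⟩
    · push Not at hC
      exact ⟨fun x => (hcl x n p).choose x, fun x hx => (hC x hx).elim⟩
  choose κ hκ using hκ
  let type (C : Set X) : Set (A × Fin (f n) × Fin (f n) × Fin n) :=
    {t | ∃ u ∈ C, ∃ v ∈ C, R t.1 u v ∧ κ C u = t.2.1 ∧ κ C v = t.2.2.1 ∧ p v = t.2.2.2}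
  let c (x : X) := (κ (cl x) x, p x, type (cl x))
  refine IsTunedRefinement.exists_fin (c := c) ⟨fun x _ x' _ h => congrArg (·.2.1) h, ?_⟩
    (by simp [Nat.card_eq_fintype_card, Fintype.card_set, clusterBound])
  intro a x hx x' hx' hxx' y hy hxy
  simp only [c, Prod.mk.injEq] at hxx'
  obtain ⟨hκxx', -, htype⟩ := hxx'
  have hyx := hsep a x hx y hy hxy
  have hedge : (a, κ (cl x) x, κ (cl x) y, p y) ∈ type (cl x) :=
    ⟨x, mem_clusterOf_self x, y, hyx, hxy, rfl, rfl, rfl⟩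
  obtain ⟨u, hu, v, hv, huv, hκu, hκv, hpv⟩ := htype ▸ hedge
  dsimp only at huv hκu hκv hpv
  have hx'C := hκ (cl x') x' rfl
  obtain ⟨y', hy', hxy', hκy'⟩ := hx'C.tuned a u hu x' (mem_clusterOf_self x')
    (hκu.trans hκxx') v hv huv
  refine ⟨y', hsub x' hx' hy', hxy', ?_⟩
  have hcly : cl y = cl x := clusterOf_eq_of_mem hyx
  have hcly' : cl y' = cl x' := clusterOf_eq_of_mem hy'
  simp only [c, hcly, hcly', htype, hx'C.refines y' hy' v hv hκy', hκy', hκv, hpv]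

/-- The lower part is coloured by refining `p` with the set of pairs `(a, k)` such that the
point has an `R_a`-successor of colour `k` in `T`. -/
lemma TunableOn.of_upper_of_lower {T : Set X} {g₁ g₂ : ℕ → ℕ} (hTY : T ⊆ Y)
    (hT : ∀ a, ∀ x ∈ T, ∀ y ∈ Y, R a x y → y ∈ T)
    (h₁ : TunableOn R T g₁) (h₂ : TunableOn R (Y \ T) g₂) :
    TunableOn R Y fun n => g₁ n + g₂ (n * 2 ^ (Fintype.card A * g₁ n)) := by
  classical
  intro n p
  obtain ⟨cT, hcT⟩ := h₁ n p
  let succ (x : X) : Set (A × Fin (g₁ n)) := {t | ∃ y ∈ T, R t.1 x y ∧ cT y = t.2}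
  obtain ⟨cB, hcB⟩ := h₂.exists_tunedRefinement fun x => (p x, succ x)
  let c (x : X) : Fin (g₁ n) ⊕ Fin (g₂ (Nat.card (Fin n × Set (A × Fin (g₁ n))))) :=
    if x ∈ T then .inl (cT x) else .inr (cB x)
  refine IsTunedRefinement.exists_fin (c := c)
    ⟨fun x hx x' hx' h => ?_, fun a x hx x' hx' h y hy hxy => ?_⟩
    (by simp [Nat.card_eq_fintype_card, Fintype.card_set])
  · by_cases hxT : x ∈ T <;> by_cases hx'T : x' ∈ T <;>
      simp only [c, hxT, hx'T, ↓reduceIte, Sum.inl.injEq, Sum.inr.injEq, reduceCtorEq] at h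
    · exact hcT.refines x hxT x' hx'T h
    · exact congrArg Prod.fst (hcB.refines x ⟨hx, hxT⟩ x' ⟨hx', hx'T⟩ h)
  · by_cases hxT : x ∈ T <;> by_cases hx'T : x' ∈ T <;>
      simp only [c, hxT, hx'T, ↓reduceIte, Sum.inl.injEq, Sum.inr.injEq, reduceCtorEq] at h
    · obtain ⟨y', hy', hxy', hcy⟩ := hcT.tuned a x hxT x' hx'T h y (hT a x hxT y hy hxy) hxy
      exact ⟨y', hTY hy', hxy', by simp [c, hy', hT a x hxT y hy hxy, hcy]⟩
    by_cases hyT : y ∈ T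
    · have hsucc : succ x = succ x' :=
        congrArg Prod.snd (hcB.refines x ⟨hx, hxT⟩ x' ⟨hx', hx'T⟩ h)
      obtain ⟨y', hy', hxy', hcy⟩ : (a, cT y) ∈ succ x' := hsucc ▸ ⟨y, hyT, hxy, rfl⟩
      exact ⟨y', hTY hy', hxy', by simp [c, hy', hyT, hcy]⟩
    · obtain ⟨y', hy', hxy', hcy⟩ :=
        hcB.tuned a x ⟨hx, hxT⟩ x' ⟨hx', hx'T⟩ h y ⟨hy, hyT⟩ hxy
      exact ⟨y', hy'.1, hxy', by simp [c, hy'.2, hyT, hcy]⟩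

def heightBound (k : ℕ) (f : ℕ → ℕ) : ℕ → ℕ → ℕ
  | 0 => id
  | h + 1 => fun n => clusterBound k f n + heightBound k f h (n * 2 ^ (k * clusterBound k f n))

lemma IsDownClosed.tunableOn_of_heightLeOn {f : ℕ → ℕ}
    (hcl : ∀ x, TunableOn R (clusterOf (unionRel R) x) f) :
    ∀ h, IsDownClosed R Y → HeightLeOn R Y h → TunableOn R Y (heightBound (Fintype.card A) f h)
  | 0, _, hH => hH.eq_empty ▸ tunableOn_empty
  | h + 1, hY, hH => by
    have hup : ∀ a, ∀ x ∈ topOf R Y, ∀ y ∈ Y, R a x y → y ∈ topOf R Y :=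
      fun a x hx y hy hxy => mem_topOf_of_reach hx hy (.single ⟨a, hxy⟩)
    refine TunableOn.of_upper_of_lower topOf_subset hup ?_
      (hY.diff_topOf.tunableOn_of_heightLeOn hcl h hH.diff_topOf)
    exact tunableOn_of_isolated_clusters (fun x hx => hY.clusterOf_subset_topOf hx)
      (fun a x hx y hy hxy => mem_clusterOf_of_mem_topOf hx hy.1 (.single ⟨a, hxy⟩)) hcl

end Gluing

theorem stmt15_general {A : Type*} [Fintype A] (h : ℕ)
    (f : ℕ → ℕ) (hf : Monotone f) :
    ∃ g : ℕ → ℕ, ∀ (X : Type u) [Nonempty X] (R : A → X → X → Prop),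
      HeightLe (unionRel R) h →
      (∀ x : X, Tunable (fun a (p q : clusterOf (unionRel R) x) => R a p.1 q.1) f) →
      Tunable R g := by
  refine ⟨heightBound (Fintype.card A) f h, fun X _ R hH hcl => ?_⟩
  have hcl' : ∀ x, TunableOn R (clusterOf (unionRel R) x) f :=
    fun x => ((hcl x).tunableOn_univ hf).of_subtype ⟨x, mem_clusterOf_self x⟩
  have hdown : IsDownClosed R Set.univ := fun _ _ _ _ => trivial
  exact (hdown.tunableOn_of_heightLeOn hcl' h fun x _ => hH x).tunable

/-- For every finite index set `A`, every `h ≥ 1` and monotone `f`, there is a function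
`g` (depending only on `f`, `h`, `A`) such that every `A`-frame of height `≤ h`, all of
whose cluster-restrictions are `f`-tunable, is `g`-tunable. -/
theorem stmt15 {A : Type*} [Fintype A] (h : ℕ) (hh : 1 ≤ h)
    (f : ℕ → ℕ) (hf : Monotone f) :
    ∃ g : ℕ → ℕ, ∀ (X : Type u) [Nonempty X] (R : A → X → X → Prop),
      HeightLe (unionRel R) h →
      (∀ x : X, Tunable (fun a (p q : clusterOf (unionRel R) x) => R a p.1 q.1) f) →
      Tunable R g :=
  stmt15_general h f hf
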